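/- Assume n ≥ 3 and let v = s_2 ∘ s_3 ∘ ⋯ ∘ s_n ∘ s_1 ∘ s_2 ∘ ⋯ ∘ s_{n−1} (composition of reflections, rightmost factor applied first). Then: v⁻¹(α_1) = α_{n−1} + 2α_n; v⁻¹(α_2) = −(α_1 + ⋯ + α_{n−2} + 2α_{n−1} + 2α_n); v⁻¹(α_j) = α_{j−2} for every 3 ≤ j ≤ n−1; and v⁻¹(α_n) = α_{n−2} + α_{n−1} + α_n. -/

import Mathlib

open scoped InnerProductSpace

private lemma sRefl_invol {V : Type*} [NormedAddCommGroup V] [InnerProductSpace ℝ V]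
    (b x : V) :
    (x - (2 * ⟪x, b⟫_ℝ / ⟪b, b⟫_ℝ) • b) -
      (2 * ⟪x - (2 * ⟪x, b⟫_ℝ / ⟪b, b⟫_ℝ) • b, b⟫_ℝ / ⟪b, b⟫_ℝ) • b = x := by
  by_cases hb : b = 0
  · simp [hb]
  · have h : ⟪b, b⟫_ℝ ≠ 0 := fun h => hb (inner_self_eq_zero.mp h)
    have key : 2 * ⟪x - (2 * ⟪x, b⟫_ℝ / ⟪b, b⟫_ℝ) • b, b⟫_ℝ / ⟪b, b⟫_ℝ
        = -(2 * ⟪x, b⟫_ℝ / ⟪b, b⟫_ℝ) := by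
      rw [inner_sub_left, real_inner_smul_left]
      field_simp
      ring
    rw [key, neg_smul, sub_neg_eq_add, sub_add_cancel]

/-- The reflection `s_b : x ↦ x - (2⟪x,b⟫/⟪b,b⟫) • b`, as a permutation of `V`. -/
noncomputable def sRefl {V : Type*} [NormedAddCommGroup V] [InnerProductSpace ℝ V]
    (b : V) : Equiv.Perm V where
  toFun x := x - (2 * ⟪x, b⟫_ℝ / ⟪b, b⟫_ℝ) • b
  invFun x := x - (2 * ⟪x, b⟫_ℝ / ⟪b, b⟫_ℝ) • b
  left_inv x := sRefl_invol b x
  right_inv x := sRefl_invol b x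

/-- `E n i` is the `i`-th standard basis vector of `ℝ^n` (for indices `1 ≤ i ≤ n`). -/
noncomputable def E (n i : ℕ) : EuclideanSpace ℝ (Fin n) :=
  if h : 1 ≤ i ∧ i ≤ n then EuclideanSpace.single (⟨i - 1, by omega⟩ : Fin n) 1 else 0

/-- The simple roots of type `Bₙ` (indexed by `1 ≤ i ≤ n`):
`αᵢ = eᵢ - eᵢ₊₁` for `i ≤ n - 1` and `αₙ = eₙ`. -/
noncomputable def alphaB (n i : ℕ) : EuclideanSpace ℝ (Fin n) :=
  if i = n then E n n else E n i - E n (i + 1)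

/-- The roots of type `Bₙ`: `±eᵢ ± eⱼ` (`1 ≤ i < j ≤ n`) and `±eᵢ` (`1 ≤ i ≤ n`). -/
def RootB (n : ℕ) : Set (EuclideanSpace ℝ (Fin n)) :=
  {x | (∃ i j, 1 ≤ i ∧ i < j ∧ j ≤ n ∧
      (x = E n i + E n j ∨ x = -(E n i + E n j) ∨ x = E n i - E n j ∨ x = E n j - E n i)) ∨
    (∃ i, 1 ≤ i ∧ i ≤ n ∧ (x = E n i ∨ x = -E n i))}

/-- A positive root of type `Bₙ`: a root which is a nonnegative integer combination of
the simple roots. -/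
def IsPosB (n : ℕ) (x : EuclideanSpace ℝ (Fin n)) : Prop :=
  x ∈ RootB n ∧ ∃ c : ℕ → ℕ, x = ∑ i ∈ Finset.Icc 1 n, (c i : ℝ) • alphaB n i

/-- A negative root of type `Bₙ`: the negative of a positive root. -/
def IsNegB (n : ℕ) (x : EuclideanSpace ℝ (Fin n)) : Prop :=
  IsPosB n (-x)

/-- The simple reflections `sᵢ = s_{αᵢ}` of type `Bₙ`. -/
noncomputable def sB (n i : ℕ) : Equiv.Perm (EuclideanSpace ℝ (Fin n)) :=
  sRefl (alphaB n i)

/-- `v = s₂ ∘ s₃ ∘ ⋯ ∘ sₙ ∘ s₁ ∘ s₂ ∘ ⋯ ∘ sₙ₋₁` (rightmost factor applied first);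
recall that in `Equiv.Perm` the product `f * g` is the composition `f ∘ g`. -/
noncomputable def vB (n : ℕ) : Equiv.Perm (EuclideanSpace ℝ (Fin n)) :=
  (((List.range (n - 1)).map fun k => sB n (k + 2)) ++
    ((List.range (n - 1)).map fun k => sB n (k + 1))).prod


section Aux

variable {V : Type*} [NormedAddCommGroup V] [InnerProductSpace ℝ V]

private lemma sRefl_apply (b x : V) :
    sRefl b x = x - (2 * ⟪x, b⟫_ℝ / ⟪b, b⟫_ℝ) • b := rfl

private lemma sRefl_add (b x y : V) : sRefl b (x + y) = sRefl b x + sRefl b y := by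
  rw [sRefl_apply, sRefl_apply, sRefl_apply, inner_add_left,
    show 2 * (⟪x, b⟫_ℝ + ⟪y, b⟫_ℝ) / ⟪b, b⟫_ℝ
      = 2 * ⟪x, b⟫_ℝ / ⟪b, b⟫_ℝ + 2 * ⟪y, b⟫_ℝ / ⟪b, b⟫_ℝ by ring]
  module

private lemma sRefl_neg (b x : V) : sRefl b (-x) = -(sRefl b x) := by
  rw [sRefl_apply, sRefl_apply, inner_neg_left,
    show 2 * -⟪x, b⟫_ℝ / ⟪b, b⟫_ℝ = -(2 * ⟪x, b⟫_ℝ / ⟪b, b⟫_ℝ) by ring]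
  module

private lemma inner_E_self (n a : ℕ) (h1 : 1 ≤ a) (h2 : a ≤ n) : ⟪E n a, E n a⟫_ℝ = 1 := by
  rw [E, dif_pos ⟨h1, h2⟩, EuclideanSpace.inner_single_left]
  simp [EuclideanSpace.single_apply]

private lemma inner_E_ne (n a b : ℕ) (h : a ≠ b) : ⟪E n a, E n b⟫_ℝ = 0 := by
  rw [E, E]
  by_cases ha : 1 ≤ a ∧ a ≤ n
  · by_cases hb : 1 ≤ b ∧ b ≤ n
    · rw [dif_pos ha, dif_pos hb, EuclideanSpace.inner_single_left]
      simp [EuclideanSpace.single_apply]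
      omega
    · rw [dif_neg hb]; simp
  · rw [dif_neg ha]; simp

private lemma alphaB_lt (n i : ℕ) (h : i ≠ n) : alphaB n i = E n i - E n (i + 1) := by
  rw [alphaB, if_neg h]

private lemma alphaB_top (n : ℕ) : alphaB n n = E n n := by
  rw [alphaB, if_pos rfl]

private lemma sB_swap₁ (n i : ℕ) (h1 : 1 ≤ i) (h2 : i + 1 ≤ n) :
    sB n i (E n i) = E n (i + 1) := by
  rw [sB, sRefl_apply, alphaB_lt n i (by omega)]
  rw [inner_sub_right, inner_sub_left, inner_sub_right, inner_sub_right,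
    inner_E_self n i h1 (by omega), inner_E_self n (i+1) (by omega) h2,
    inner_E_ne n i (i+1) (by omega), inner_E_ne n (i+1) i (by omega)]
  norm_num

private lemma sB_swap₂ (n i : ℕ) (h1 : 1 ≤ i) (h2 : i + 1 ≤ n) :
    sB n i (E n (i + 1)) = E n i := by
  rw [sB, sRefl_apply, alphaB_lt n i (by omega)]
  rw [inner_sub_right, inner_sub_left, inner_sub_right, inner_sub_right,
    inner_E_self n i h1 (by omega), inner_E_self n (i+1) (by omega) h2,
    inner_E_ne n i (i+1) (by omega), inner_E_ne n (i+1) i (by omega)]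
  norm_num

private lemma sB_fix (n i k : ℕ) (h1 : 1 ≤ i) (h2 : i + 1 ≤ n)
    (hk1 : k ≠ i) (hk2 : k ≠ i + 1) : sB n i (E n k) = E n k := by
  rw [sB, sRefl_apply, alphaB_lt n i (by omega)]
  rw [inner_sub_right, inner_E_ne n k i hk1, inner_E_ne n k (i+1) hk2]
  norm_num

private lemma sB_top (n : ℕ) (h : 1 ≤ n) : sB n n (E n n) = -(E n n) := by
  rw [sB, sRefl_apply, alphaB_top, inner_E_self n n h le_rfl]
  norm_num
  module

private lemma sB_top_fix (n k : ℕ) (hk : k ≠ n) : sB n n (E n k) = E n k := by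
  rw [sB, sRefl_apply, alphaB_top, inner_E_ne n k n hk]
  norm_num

/-- Partial product `s₁ ∘ s₂ ∘ ⋯ ∘ s_m` (rightmost applied first). -/
private noncomputable def Pp (n m : ℕ) : Equiv.Perm (EuclideanSpace ℝ (Fin n)) :=
  ((List.range m).map fun k => sB n (k + 1)).prod

/-- Partial product `s₂ ∘ s₃ ∘ ⋯ ∘ s_{m+1}` (rightmost applied first). -/
private noncomputable def Qp (n m : ℕ) : Equiv.Perm (EuclideanSpace ℝ (Fin n)) :=
  ((List.range m).map fun k => sB n (k + 2)).prod

private lemma Pp_succ (n m : ℕ) : Pp n (m + 1) = Pp n m * sB n (m + 1) := by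
  rw [Pp, List.range_succ, List.map_append, List.prod_append]
  simp [Pp]

private lemma Qp_succ (n m : ℕ) : Qp n (m + 1) = Qp n m * sB n (m + 2) := by
  rw [Qp, List.range_succ, List.map_append, List.prod_append]
  simp [Qp]

private lemma Pp_fix (n : ℕ) : ∀ m, m + 1 ≤ n → ∀ j, m + 1 < j → Pp n m (E n j) = E n j := by
  intro m
  induction m with
  | zero => intro _ j _; simp [Pp]
  | succ m ih =>
    intro hm j hj
    rw [Pp_succ, Equiv.Perm.mul_apply,
      sB_fix n (m+1) j (by omega) (by omega) (by omega) (by omega)]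
    exact ih (by omega) j (by omega)

private lemma Pp_top (n : ℕ) : ∀ m, m + 1 ≤ n → Pp n m (E n (m + 1)) = E n 1 := by
  intro m
  induction m with
  | zero => intro _; simp [Pp]
  | succ m ih =>
    intro hm
    rw [Pp_succ, Equiv.Perm.mul_apply, sB_swap₂ n (m+1) (by omega) (by omega)]
    exact ih (by omega)

private lemma Pp_lt (n : ℕ) : ∀ m, m + 1 ≤ n → ∀ j, 1 ≤ j → j ≤ m →
    Pp n m (E n j) = E n (j + 1) := by
  intro m
  induction m with
  | zero => intro _ j h1 h2; omega
  | succ m ih =>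
    intro hm j h1 h2
    rcases eq_or_lt_of_le h2 with h | h
    · subst h
      rw [Pp_succ, Equiv.Perm.mul_apply, sB_swap₁ n (m+1) (by omega) (by omega)]
      exact Pp_fix n m (by omega) (m + 2) (by omega)
    · rw [Pp_succ, Equiv.Perm.mul_apply,
        sB_fix n (m+1) j (by omega) (by omega) (by omega) (by omega)]
      exact ih (by omega) j h1 (by omega)

private lemma Qp_fix_one (n : ℕ) : ∀ m, m + 2 ≤ n → Qp n m (E n 1) = E n 1 := by
  intro m
  induction m with
  | zero => intro _; simp [Qp]
  | succ m ih =>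
    intro hm
    rw [Qp_succ, Equiv.Perm.mul_apply,
      sB_fix n (m+2) 1 (by omega) (by omega) (by omega) (by omega)]
    exact ih (by omega)

private lemma Qp_fix_hi (n : ℕ) : ∀ m, m + 2 ≤ n → ∀ j, m + 2 < j →
    Qp n m (E n j) = E n j := by
  intro m
  induction m with
  | zero => intro _ j _; simp [Qp]
  | succ m ih =>
    intro hm j hj
    rw [Qp_succ, Equiv.Perm.mul_apply,
      sB_fix n (m+2) j (by omega) (by omega) (by omega) (by omega)]
    exact ih (by omega) j (by omega)

private lemma Qp_top (n : ℕ) : ∀ m, m + 2 ≤ n → Qp n m (E n (m + 2)) = E n 2 := by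
  intro m
  induction m with
  | zero => intro _; simp [Qp]
  | succ m ih =>
    intro hm
    rw [Qp_succ, Equiv.Perm.mul_apply, sB_swap₂ n (m+2) (by omega) (by omega)]
    exact ih (by omega)

private lemma Qp_lt (n : ℕ) : ∀ m, m + 2 ≤ n → ∀ j, 2 ≤ j → j ≤ m + 1 →
    Qp n m (E n j) = E n (j + 1) := by
  intro m
  induction m with
  | zero => intro _ j h1 h2; omega
  | succ m ih =>
    intro hm j h1 h2
    rcases eq_or_lt_of_le h2 with h | h
    · subst h
      rw [Qp_succ, Equiv.Perm.mul_apply, sB_swap₁ n (m+2) (by omega) (by omega)]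
      exact Qp_fix_hi n m (by omega) (m + 3) (by omega)
    · rw [Qp_succ, Equiv.Perm.mul_apply,
        sB_fix n (m+2) j (by omega) (by omega) (by omega) (by omega)]
      exact ih (by omega) j h1 (by omega)

private lemma Qp_neg (n : ℕ) : ∀ m (x : EuclideanSpace ℝ (Fin n)),
    Qp n m (-x) = -(Qp n m x) := by
  intro m
  induction m with
  | zero => intro x; simp [Qp]
  | succ m ih =>
    intro x
    rw [Qp_succ, Equiv.Perm.mul_apply, Equiv.Perm.mul_apply, sB, sRefl_neg, ih]

private lemma prod_add (n : ℕ) (l : List (Equiv.Perm (EuclideanSpace ℝ (Fin n))))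
    (h : ∀ s ∈ l, ∃ b, s = sRefl b) (x y : EuclideanSpace ℝ (Fin n)) :
    l.prod (x + y) = l.prod x + l.prod y := by
  induction l with
  | nil => simp
  | cons a t ih =>
    rw [List.prod_cons, Equiv.Perm.mul_apply, Equiv.Perm.mul_apply, Equiv.Perm.mul_apply,
      ih fun s hs => h s (List.mem_cons_of_mem a hs)]
    obtain ⟨b, rfl⟩ := h a List.mem_cons_self
    exact sRefl_add b _ _

private lemma prod_neg (n : ℕ) (l : List (Equiv.Perm (EuclideanSpace ℝ (Fin n))))
    (h : ∀ s ∈ l, ∃ b, s = sRefl b) (x : EuclideanSpace ℝ (Fin n)) :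
    l.prod (-x) = -(l.prod x) := by
  induction l with
  | nil => simp
  | cons a t ih =>
    rw [List.prod_cons, Equiv.Perm.mul_apply, Equiv.Perm.mul_apply,
      ih fun s hs => h s (List.mem_cons_of_mem a hs)]
    obtain ⟨b, rfl⟩ := h a List.mem_cons_self
    exact sRefl_neg b _

private lemma vB_mem (n : ℕ) :
    ∀ s ∈ (((List.range (n - 1)).map fun k => sB n (k + 2)) ++
      ((List.range (n - 1)).map fun k => sB n (k + 1))), ∃ b, s = sRefl b := by
  intro s hs
  rw [List.mem_append] at hs
  rcases hs with hs | hs <;> rw [List.mem_map] at hs <;>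
    obtain ⟨k, _, rfl⟩ := hs
  · exact ⟨alphaB n (k + 2), rfl⟩
  · exact ⟨alphaB n (k + 1), rfl⟩

private lemma vB_add (n : ℕ) (x y : EuclideanSpace ℝ (Fin n)) :
    vB n (x + y) = vB n x + vB n y :=
  prod_add n _ (vB_mem n) x y

private lemma vB_neg (n : ℕ) (x : EuclideanSpace ℝ (Fin n)) :
    vB n (-x) = -(vB n x) :=
  prod_neg n _ (vB_mem n) x

private lemma vB_sub (n : ℕ) (x y : EuclideanSpace ℝ (Fin n)) :
    vB n (x - y) = vB n x - vB n y := by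
  rw [sub_eq_add_neg, vB_add, vB_neg, sub_eq_add_neg]

private lemma vB_eq (m : ℕ) :
    vB (m + 3) = Qp (m + 3) (m + 1) * sB (m + 3) (m + 3) * Pp (m + 3) (m + 2) := by
  rw [vB, List.prod_append]
  have h : m + 3 - 1 = m + 2 := rfl
  rw [h]
  congr 1
  rw [show m + 2 = (m + 1) + 1 from rfl, List.range_succ, List.map_append, List.prod_append]
  simp [Qp]

private lemma vB_E_lt (m k : ℕ) (h1 : 1 ≤ k) (h2 : k ≤ m + 1) :
    vB (m + 3) (E (m + 3) k) = E (m + 3) (k + 2) := by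
  rw [vB_eq, Equiv.Perm.mul_apply, Equiv.Perm.mul_apply,
    Pp_lt (m + 3) (m + 2) (by omega) k h1 (by omega),
    sB_top_fix (m + 3) (k + 1) (by omega),
    Qp_lt (m + 3) (m + 1) (by omega) (k + 1) (by omega) (by omega)]

private lemma vB_E_mid (m : ℕ) :
    vB (m + 3) (E (m + 3) (m + 2)) = -(E (m + 3) 2) := by
  rw [vB_eq, Equiv.Perm.mul_apply, Equiv.Perm.mul_apply,
    Pp_lt (m + 3) (m + 2) (by omega) (m + 2) (by omega) (by omega),
    sB_top (m + 3) (by omega), Qp_neg,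
    Qp_top (m + 3) (m + 1) (by omega)]

private lemma vB_E_top (m : ℕ) :
    vB (m + 3) (E (m + 3) (m + 3)) = E (m + 3) 1 := by
  rw [vB_eq, Equiv.Perm.mul_apply, Equiv.Perm.mul_apply,
    Pp_top (m + 3) (m + 2) (by omega),
    sB_top_fix (m + 3) 1 (by omega),
    Qp_fix_one (m + 3) (m + 1) (by omega)]

private lemma sum_alpha (m : ℕ) : ∀ M, 1 ≤ M → M ≤ m + 2 →
    ∑ k ∈ Finset.Icc 1 M, alphaB (m + 3) k = E (m + 3) 1 - E (m + 3) (M + 1) := by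
  intro M
  induction M with
  | zero => intro h; omega
  | succ M ih =>
    intro _ hM
    rcases Nat.eq_or_lt_of_le (show 1 ≤ M + 1 by omega) with h | h
    · rw [← h, Finset.Icc_self, Finset.sum_singleton, alphaB_lt (m + 3) 1 (by omega)]
    · rw [Finset.sum_Icc_succ_top (by omega : 1 ≤ M + 1),
        ih (by omega) (by omega), alphaB_lt (m + 3) (M + 1) (by omega)]
      abel

end Aux

/-- Type `Bₙ` (`n ≥ 3`): for `v = s₂ ∘ ⋯ ∘ sₙ ∘ s₁ ∘ ⋯ ∘ sₙ₋₁` one has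
`v⁻¹(α₁) = αₙ₋₁ + 2αₙ`, `v⁻¹(α₂) = -(α₁ + ⋯ + αₙ₋₂ + 2αₙ₋₁ + 2αₙ)`,
`v⁻¹(αⱼ) = αⱼ₋₂` for `3 ≤ j ≤ n - 1`, and `v⁻¹(αₙ) = αₙ₋₂ + αₙ₋₁ + αₙ`. -/
theorem stmt_7 (n : ℕ) (hn : 3 ≤ n) :
    (vB n)⁻¹ (alphaB n 1) = alphaB n (n - 1) + (2 : ℝ) • alphaB n n ∧
    (vB n)⁻¹ (alphaB n 2) =
      -((∑ k ∈ Finset.Icc 1 (n - 2), alphaB n k) +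
        (2 : ℝ) • alphaB n (n - 1) + (2 : ℝ) • alphaB n n) ∧
    (∀ j, 3 ≤ j → j ≤ n - 1 → (vB n)⁻¹ (alphaB n j) = alphaB n (j - 2)) ∧
    (vB n)⁻¹ (alphaB n n) = alphaB n (n - 2) + alphaB n (n - 1) + alphaB n n := by
  obtain ⟨m, rfl⟩ : ∃ m, n = m + 3 := ⟨n - 3, by omega⟩
  simp only [show m + 3 - 1 = m + 2 from rfl, show m + 3 - 2 = m + 1 from rfl]
  refine ⟨?_, ?_, ?_, ?_⟩
  · rw [Equiv.Perm.inv_def, Equiv.symm_apply_eq]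
    have harg : alphaB (m+3) (m+2) + (2:ℝ) • alphaB (m+3) (m+3)
        = E (m+3) (m+2) + E (m+3) (m+3) := by
      rw [alphaB_lt (m+3) (m+2) (by omega), alphaB_top]
      module
    rw [harg, vB_add, vB_E_mid, vB_E_top, alphaB_lt (m+3) 1 (by omega)]
    module
  · rw [Equiv.Perm.inv_def, Equiv.symm_apply_eq]
    have harg : (∑ k ∈ Finset.Icc 1 (m+1), alphaB (m+3) k) +
        (2:ℝ) • alphaB (m+3) (m+2) + (2:ℝ) • alphaB (m+3) (m+3)
        = E (m+3) 1 + E (m+3) (m+2) := by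
      rw [sum_alpha m (m+1) (by omega) (by omega), alphaB_lt (m+3) (m+2) (by omega),
        alphaB_top]
      module
    rw [harg, vB_neg, vB_add, vB_E_lt m 1 (by omega) (by omega), vB_E_mid,
      alphaB_lt (m+3) 2 (by omega)]
    module
  · intro j hj3 hjle
    obtain ⟨t, rfl⟩ : ∃ t, j = t + 3 := ⟨j - 3, by omega⟩
    rw [Equiv.Perm.inv_def, Equiv.symm_apply_eq,
      show t + 3 - 2 = t + 1 from rfl,
      alphaB_lt (m+3) (t+1) (by omega), vB_sub,
      vB_E_lt m (t+1) (by omega) (by omega), vB_E_lt m (t+2) (by omega) (by omega),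
      alphaB_lt (m+3) (t+3) (by omega)]
  · rw [Equiv.Perm.inv_def, Equiv.symm_apply_eq]
    have harg : alphaB (m+3) (m+1) + alphaB (m+3) (m+2) + alphaB (m+3) (m+3)
        = E (m+3) (m+1) := by
      rw [alphaB_lt (m+3) (m+1) (by omega), alphaB_lt (m+3) (m+2) (by omega), alphaB_top]
      module
    rw [harg, vB_E_lt m (m+1) (by omega) (by omega), alphaB_top]
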